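/- Fix a partition of the vertices of Q_n into two disjoint (n-1)-dimensional subcubes S_1 and S_2, choose canonical labellings of S_1 and S_2, and integers z_1, z_2 ∈ {0,1,2}. Colour a vertex in layer m of S_i red if m ≡ z_i (mod 3) and blue otherwise. Then the resulting colouring of Q_n contains no 3-dimensional subcube in which seven specified vertices (all but one corner) are blue; i.e. the colouring is B_3^--free. -/

import Mathlib

/-!
An injective homomorphism `Q_m → Q_N` is a subcube embedding: it sends every edge in direction
`k` to an edge in direction `c k`, with `c` injective. Indeed the image of a square of `Q_m` is
a 4-cycle with distinct diagonals, hence a square of `Q_N`, so opposite edges of a square have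
the same image direction, and `Q_m` is connected.

For an embedded `Q_3`, at most one direction `k` is sent to the coordinate `j` separating the
halves, so the face of the `Q_3` opposite to the red corner `v₀` across `k` is a square lying in
a single half `S_b`. Its labels in `Q_{n-1}` form a square `y, y + e_p, y + e_q, y + e_p + e_q`,
whose weights take three consecutive values; one of them is `≡ z b (mod 3)`, so that face,
which should be all blue, has a red vertex.
-/

/-- The hypercube graph `Q_n` on `{0,1}^n`. -/
def Qcube (n : ℕ) : SimpleGraph (Fin n → Bool) where
  Adj x y := hammingDist x y = 1
  symm := ⟨fun x y h => by change hammingDist x y = 1 at h; change hammingDist y x = 1; rwa [hammingDist_comm]⟩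
  loopless := ⟨fun x h => by change hammingDist x x = 1 at h; simp [hammingDist_self] at h⟩

/-- The Hamming weight (layer) of a vertex of the hypercube. -/
def wt {n : ℕ} (x : Fin n → Bool) : ℕ := (Finset.univ.filter fun i => x i = true).card

open Function

lemma Function.Injective.exists_forall_apply_ne_of_ne {ι β : Type*} [Nonempty ι] {c : ι → β}
    (hc : Injective c) (j : β) : ∃ k, ∀ l ≠ k, c l ≠ j := by
  by_cases h : ∃ k, c k = j
  · obtain ⟨k, rfl⟩ := h
    exact ⟨k, fun l hl => hc.ne hl⟩
  · exact ⟨Classical.arbitrary ι, fun l _ hl => h ⟨l, hl⟩⟩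

namespace Qcube

variable {N : ℕ}

def flipAt (i : Fin N) (x : Fin N → Bool) : Fin N → Bool := update x i (!x i)

lemma flipAt_apply (i c : Fin N) (x : Fin N → Bool) :
    flipAt i x c = if c = i then !x c else x c := by
  unfold flipAt; split_ifs with h
  · subst h; simp
  · simp [h]

@[simp] lemma flipAt_apply_self (i : Fin N) (x : Fin N → Bool) : flipAt i x i = !x i := by
  simp [flipAt]

@[simp] lemma flipAt_apply_of_ne {i c : Fin N} (h : c ≠ i) (x : Fin N → Bool) :
    flipAt i x c = x c := by
  simp [flipAt, h]

lemma flipAt_involutive (i : Fin N) : Involutive (flipAt i) := fun x => by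
  funext c; simp only [flipAt_apply]; split_ifs <;> simp

lemma flipAt_comm (i k : Fin N) (x : Fin N → Bool) :
    flipAt i (flipAt k x) = flipAt k (flipAt i x) := by
  funext c; simp only [flipAt_apply]; split_ifs <;> rfl

lemma flipAt_eq_flipAt_iff {p q : Fin N} {x : Fin N → Bool} :
    flipAt p x = flipAt q x ↔ p = q := by
  refine ⟨fun h => by_contra fun hpq => ?_, fun h => h ▸ rfl⟩
  simpa [hpq] using congrFun h p

lemma flipAt_flipAt_eq_self_iff {p q : Fin N} {x : Fin N → Bool} :
    flipAt p (flipAt q x) = x ↔ p = q := by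
  refine ⟨fun h => ?_, fun h => h ▸ flipAt_involutive q x⟩
  have := congrArg (flipAt p) h
  rw [flipAt_involutive] at this
  exact (flipAt_eq_flipAt_iff.1 this).symm

lemma flipAt_flipAt_eq_flipAt_flipAt {p q p' q' : Fin N} {x : Fin N → Bool}
    (hqq' : q ≠ q') (hpq : p ≠ q) (h : flipAt p (flipAt q x) = flipAt p' (flipAt q' x)) :
    p = q' ∧ p' = q := by
  have hp' : p' = q := by
    by_contra hp'
    have : q = p' := by simpa [flipAt_apply, hpq.symm, hqq'] using congrFun h q
    exact hp' this.symm
  subst hp'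
  refine ⟨by_contra fun hpq' => hpq' ?_, rfl⟩
  have : q' = p := by simpa [flipAt_apply, hqq'.symm] using congrFun h q'
  exact this.symm

lemma hammingDist_flipAt_of_ne {i : Fin N} {x y : Fin N → Bool} (h : x i ≠ y i) :
    hammingDist (flipAt i x) y + 1 = hammingDist x y := by
  have : (Finset.univ.filter fun c => flipAt i x c ≠ y c) =
      (Finset.univ.filter fun c => x c ≠ y c).erase i := by
    ext c; by_cases hc : c = i
    · subst hc; simp_all
    · simp [hc]
  rw [hammingDist, hammingDist, this, Finset.card_erase_add_one (by simpa using h)]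

theorem adj_iff_exists_flipAt {x y : Fin N → Bool} :
    (Qcube N).Adj x y ↔ ∃ i, y = flipAt i x := by
  change hammingDist x y = 1 ↔ _
  constructor
  · intro h
    obtain ⟨i, hi⟩ := Function.ne_iff.1 (hammingDist_pos.1 (h ▸ one_pos))
    have := hammingDist_flipAt_of_ne hi
    exact ⟨i, (hammingDist_eq_zero.1 (by omega)).symm⟩
  · rintro ⟨i, rfl⟩
    simpa using (hammingDist_flipAt_of_ne (x := x) (y := flipAt i x) (i := i) (by simp)).symm

lemma adj_flipAt (i : Fin N) (x : Fin N → Bool) : (Qcube N).Adj x (flipAt i x) :=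
  adj_iff_exists_flipAt.2 ⟨i, rfl⟩

lemma eq_of_forall_flipAt_invariant {α : Type*} {F : (Fin N → Bool) → α}
    (hF : ∀ i x, F (flipAt i x) = F x) (x y : Fin N → Bool) : F x = F y := by
  induction h : hammingDist x y generalizing x with
  | zero => rw [hammingDist_eq_zero.1 h]
  | succ d ih =>
    obtain ⟨i, hi⟩ := Function.ne_iff.1 (hammingDist_pos.1 (by omega : 0 < hammingDist x y))
    rw [← hF i x]
    exact ih _ (by have := hammingDist_flipAt_of_ne hi; omega)

lemma wt_flipAt (i : Fin N) (x : Fin N → Bool) :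
    (wt (flipAt i x) : ℤ) = wt x + if x i then -1 else 1 := by
  have key : ∀ y : Fin N → Bool, y i = false →
      wt (flipAt i y) = wt y + 1 := by
    intro y hy
    have : (Finset.univ.filter fun c => flipAt i y c = true) =
        insert i (Finset.univ.filter fun c => y c = true) := by
      ext c; by_cases hc : c = i
      · subst hc; simp [hy]
      · simp [hc]
    rw [wt, wt, this, Finset.card_insert_of_notMem (by simp [hy])]
  cases hx : x i
  · simp [key x hx]
  · have := key (flipAt i x) (by simp [hx])
    rw [flipAt_involutive] at this
    simp [this]

lemma exists_wt_mod_three_eq_of_square (x : Fin N → Bool) {p q : Fin N} (hpq : p ≠ q)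
    {r : ℕ} (hr : r < 3) :
    wt x % 3 = r ∨ wt (flipAt p x) % 3 = r ∨ wt (flipAt q x) % 3 = r ∨
      wt (flipAt p (flipAt q x)) % 3 = r := by
  have hp := wt_flipAt p x
  have hq := wt_flipAt q x
  have hpq' := wt_flipAt p (flipAt q x)
  rw [flipAt_apply_of_ne hpq] at hpq'
  split_ifs at hp hq hpq' <;> omega

lemma exists_square_of_cycle {x y₁ y₂ w : Fin N → Bool} (h₁ : (Qcube N).Adj x y₁)
    (h₂ : (Qcube N).Adj x y₂) (h₁w : (Qcube N).Adj y₁ w) (h₂w : (Qcube N).Adj y₂ w)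
    (hy : y₁ ≠ y₂) (hxw : x ≠ w) :
    ∃ p q, p ≠ q ∧ y₁ = flipAt p x ∧ y₂ = flipAt q x ∧ w = flipAt p (flipAt q x) := by
  obtain ⟨p, rfl⟩ := adj_iff_exists_flipAt.1 h₁
  obtain ⟨q, rfl⟩ := adj_iff_exists_flipAt.1 h₂
  obtain ⟨s, rfl⟩ := adj_iff_exists_flipAt.1 h₁w
  obtain ⟨t, ht⟩ := adj_iff_exists_flipAt.1 h₂w
  have hpq : p ≠ q := fun h => hy (h ▸ rfl)
  have hsp : s ≠ p := fun h => hxw (h ▸ (flipAt_involutive p x).symm)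
  obtain ⟨rfl, -⟩ := flipAt_flipAt_eq_flipAt_flipAt hpq hsp ht
  exact ⟨p, s, hpq, rfl, rfl, flipAt_comm s p x⟩

theorem exists_flipAt_map_of_injective {m : ℕ} {f : (Fin m → Bool) → (Fin N → Bool)}
    (hf : Injective f) (hadj : ∀ a b, (Qcube m).Adj a b → (Qcube N).Adj (f a) (f b)) :
    ∃ c : Fin m → Fin N, Injective c ∧ ∀ k a, f (flipAt k a) = flipAt (c k) (f a) := by
  choose d hd using fun k a => adj_iff_exists_flipAt.1 (hadj a _ (adj_flipAt k a))
  have hd_flipAt : ∀ k l a, d k (flipAt l a) = d k a := by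
    intro k l a
    rcases eq_or_ne l k with rfl | hlk
    · have h := hd l (flipAt l a)
      rw [flipAt_involutive, hd l a] at h
      exact flipAt_flipAt_eq_self_iff.1 h.symm
    · have hne : d l a ≠ d k a := fun h => hlk <| flipAt_eq_flipAt_iff.1 <|
        hf (a₁ := flipAt l a) (a₂ := flipAt k a) (by rw [hd, hd, h])
      have hsq : d k (flipAt l a) ≠ d l a := fun h => hlk <| Eq.symm <|
        flipAt_flipAt_eq_self_iff.1 <|
          hf (a₁ := flipAt k (flipAt l a)) (a₂ := a) (by rw [hd, hd, h, flipAt_involutive])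
      have h := congrArg f (flipAt_comm k l a)
      rw [hd, hd, hd, hd] at h
      exact (flipAt_flipAt_eq_flipAt_flipAt hne hsq h).1
  refine ⟨fun k => d k 0, fun k l h => ?_, fun k a => ?_⟩
  · exact flipAt_eq_flipAt_iff.1 <| hf (a₁ := flipAt k 0) (a₂ := flipAt l 0) <| by
      rw [hd, hd]; exact congrArg (flipAt · (f 0)) h
  · rw [hd, eq_of_forall_flipAt_invariant (hd_flipAt k) a 0]

theorem not_all_blue_square {n M : ℕ} {j : Fin n}
    {g : Bool → (Fin M → Bool) → (Fin n → Bool)}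
    (hgrange : ∀ b, Set.range (g b) = {x : Fin n → Bool | x j = b})
    (hgadj : ∀ b x y, (Qcube M).Adj x y ↔ (Qcube n).Adj (g b x) (g b y))
    {z : Bool → ℕ} (hz : ∀ b, z b < 3) {Blue : (Fin n → Bool) → Prop}
    (hBlue : ∀ b y, Blue (g b y) ↔ ¬ (wt y % 3 = z b))
    (x : Fin n → Bool) {p q : Fin n} (hpq : p ≠ q) (hp : p ≠ j) (hq : q ≠ j) :
    ¬ (Blue x ∧ Blue (flipAt p x) ∧ Blue (flipAt q x) ∧ Blue (flipAt p (flipAt q x))) := by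
  rintro ⟨h₀, h₁, h₂, h₃⟩
  set b := x j
  have hpre : ∀ w, w j = b → ∃ y, g b y = w := fun w hw => by
    rw [← Set.mem_range, hgrange]; exact hw
  obtain ⟨y₀, hy₀⟩ := hpre x rfl
  obtain ⟨y₁, hy₁⟩ := hpre (flipAt p x) (flipAt_apply_of_ne hp.symm x)
  obtain ⟨y₂, hy₂⟩ := hpre (flipAt q x) (flipAt_apply_of_ne hq.symm x)
  obtain ⟨y₃, hy₃⟩ := hpre (flipAt p (flipAt q x)) (by simp [hp.symm, hq.symm, b])
  have hadj : ∀ {y y' w w'}, g b y = w → g b y' = w' → (Qcube n).Adj w w' →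
      (Qcube M).Adj y y' := fun hy hy' h => (hgadj b _ _).2 (hy ▸ hy' ▸ h)
  have hy₁₂ : y₁ ≠ y₂ := fun h => hpq <| flipAt_eq_flipAt_iff.1 <| by
    rw [← hy₁, ← hy₂, h]
  have hy₀₃ : y₀ ≠ y₃ := fun h => hpq <| (flipAt_flipAt_eq_self_iff (x := x)).1 <| by
    rw [← hy₃, ← h, hy₀]
  obtain ⟨p', q', hpq', rfl, rfl, rfl⟩ := exists_square_of_cycle
    (hadj hy₀ hy₁ (adj_flipAt p x)) (hadj hy₀ hy₂ (adj_flipAt q x))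
    (hadj hy₁ hy₃ (by rw [flipAt_comm]; exact adj_flipAt q _))
    (hadj hy₂ hy₃ (adj_flipAt p _)) hy₁₂ hy₀₃
  rcases exists_wt_mod_three_eq_of_square y₀ hpq' (hz b) with h | h | h | h
  · exact (hBlue b _).1 (hy₀ ▸ h₀) h
  · exact (hBlue b _).1 (hy₁ ▸ h₁) h
  · exact (hBlue b _).1 (hy₂ ▸ h₂) h
  · exact (hBlue b _).1 (hy₃ ▸ h₃) h

end Qcube

open Qcube in
theorem stmt15_general (n : ℕ) (j : Fin n)
    (g : Bool → (Fin (n - 1) → Bool) → (Fin n → Bool))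
    (hgrange : ∀ b, Set.range (g b) = {x : Fin n → Bool | x j = b})
    (hgadj : ∀ b x y, (Qcube (n - 1)).Adj x y ↔ (Qcube n).Adj (g b x) (g b y))
    (z : Bool → ℕ) (hz : ∀ b, z b < 3)
    (Blue : (Fin n → Bool) → Prop)
    (hBlue : ∀ b y, Blue (g b y) ↔ ¬ (wt y % 3 = z b)) :
    ¬ ∃ (f : (Fin 3 → Bool) → (Fin n → Bool)) (v₀ : Fin 3 → Bool),
      Function.Injective f ∧
      (∀ a b, (Qcube 3).Adj a b → (Qcube n).Adj (f a) (f b)) ∧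
      ∀ a, a ≠ v₀ → Blue (f a) := by
  rintro ⟨f, v₀, hf, hadj, hblue⟩
  obtain ⟨c, hc, hfc⟩ := exists_flipAt_map_of_injective hf hadj
  obtain ⟨k, hk⟩ := hc.exists_forall_apply_ne_of_ne j
  obtain ⟨l₁, l₂, hl₁, hl₂, hl₁₂⟩ : ∃ l₁ l₂ : Fin 3, l₁ ≠ k ∧ l₂ ≠ k ∧ l₁ ≠ l₂ := by
    fin_cases k <;> decide
  set a := flipAt k v₀
  have hv₀ : ∀ w : Fin 3 → Bool, w k = a k → w ≠ v₀ := by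
    rintro w hw rfl; simp [a] at hw
  refine not_all_blue_square hgrange hgadj hz hBlue (f a) (hc.ne hl₁₂) (hk l₁ hl₁) (hk l₂ hl₂)
    ⟨?_, ?_, ?_, ?_⟩
  · exact hblue a (hv₀ a rfl)
  · rw [← hfc]; exact hblue _ (hv₀ _ (flipAt_apply_of_ne hl₁.symm a))
  · rw [← hfc]; exact hblue _ (hv₀ _ (flipAt_apply_of_ne hl₂.symm a))
  · rw [← hfc, ← hfc]; exact hblue _ (hv₀ _ (by simp [hl₁.symm, hl₂.symm]))

/-- Partition `Q_n` into two disjoint `(n-1)`-dimensional subcubes `S_false`,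
`S_true` (the halves `{x : x j = b}` for a coordinate `j`), choose canonical
labellings `g b : Q_{n-1} ≃ S_b`, and residues `z b ∈ {0,1,2}`.  Colour a vertex
in layer `m` of `S_b` red if `m ≡ z b (mod 3)` and blue otherwise.  Then the
resulting colouring of `Q_n` is `B_3^-`-free: there is no 3-dimensional subcube
in which all vertices but one corner are blue. -/
theorem stmt15 (n : ℕ) (hn : 1 ≤ n) (j : Fin n)
    (g : Bool → (Fin (n - 1) → Bool) → (Fin n → Bool))
    (hginj : ∀ b, Function.Injective (g b))
    (hgrange : ∀ b, Set.range (g b) = {x : Fin n → Bool | x j = b})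
    (hgadj : ∀ b x y, (Qcube (n - 1)).Adj x y ↔ (Qcube n).Adj (g b x) (g b y))
    (z : Bool → ℕ) (hz : ∀ b, z b < 3)
    (Blue : (Fin n → Bool) → Prop)
    (hBlue : ∀ b y, Blue (g b y) ↔ ¬ (wt y % 3 = z b)) :
    ¬ ∃ (f : (Fin 3 → Bool) → (Fin n → Bool)) (v₀ : Fin 3 → Bool),
      Function.Injective f ∧
      (∀ a b, (Qcube 3).Adj a b → (Qcube n).Adj (f a) (f b)) ∧
      ∀ a, a ≠ v₀ → Blue (f a) :=
  stmt15_general n j g hgrange hgadj z hz Blue hBlue
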